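/- Let (E, I) be a matroid k-parity constraint given by a matroid M on vertices V and disjoint edges E of size at most k, and let A, B ∈ I be disjoint feasible sets. Then there exists a collection of sets {N_b ⊆ A : b ∈ B} such that: (1) A ∪ {b ∈ B : N_b = ∅} ∈ I; (2) for every a ∈ A, (A \ {a}) ∪ {b ∈ B : N_b = {a}} ∈ I; and (3) for every a ∈ A, |{b ∈ B : a ∈ N_b}| ≤ k. -/

import Mathlib

/-!
Extend `⋃₀ A` to a basis `D` of `⋃₀ A ∪ ⋃₀ B`. The elements of `⋃₀ B` outside `D` are spanned
by `D`, and a Greene–Magnanti style multiple exchange distributes them into sets `R a`, one for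
each edge `a ∈ A`, such that `(D \ a) ∪ R a` is independent. Each step of that exchange splits off
one edge by Edmonds' matroid partition theorem for two contractions of `M`, whose rank condition
is a consequence of submodularity. Put `N b := {a ∈ A | b meets R a}`. An edge `b` with
`N b = ∅` lies in `D`, one with `N b = {a}` lies in `(D \ a) ∪ R a`. Finally `|R a| ≤ |a| ≤ k`
because `(D \ a) ∪ R a` is independent in the span of `D`, and the disjoint edges of `B` that
meet `R a` are at most `|R a|` many.
-/

open Set

namespace Matroid

variable {α : Type*} {M M₁ M₂ : Matroid α} {C₁ C₂ D I P₁ P₂ S X Y Z : Set α} {e : α}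

/-- Junk value `0` on sets of infinite rank. -/
noncomputable def rk (M : Matroid α) (X : Set α) : ℕ := (M.eRk X).toNat

lemma Indep.rk_eq_ncard (hI : M.Indep I) : M.rk I = I.ncard := by
  rw [rk, hI.eRk_eq_encard, ncard_def]

lemma rk_closure_eq (M : Matroid α) (X : Set α) : M.rk (M.closure X) = M.rk X := by
  rw [rk, eRk_closure_eq, rk]

lemma cast_rk_eq (M : Matroid α) [M.RankFinite] (X : Set α) : (M.rk X : ℕ∞) = M.eRk X :=
  ENat.natCast_toNat (eRk_ne_top_iff.2 (M.isRkFinite_set X))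

section RankFinite

variable [M.RankFinite]

lemma rk_mono (hXY : X ⊆ Y) : M.rk X ≤ M.rk Y := by
  rw [← Nat.cast_le (α := ℕ∞), cast_rk_eq, cast_rk_eq]
  exact M.eRk_mono hXY

lemma rk_inter_add_rk_union_le (X Y : Set α) :
    M.rk (X ∩ Y) + M.rk (X ∪ Y) ≤ M.rk X + M.rk Y := by
  rw [← Nat.cast_le (α := ℕ∞)]
  push_cast
  simpa only [cast_rk_eq] using M.eRk_submod X Y

lemma rk_insert_le_add_one (e : α) (X : Set α) : M.rk (insert e X) ≤ M.rk X + 1 := by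
  rw [← Nat.cast_le (α := ℕ∞)]
  push_cast
  simpa only [cast_rk_eq] using M.eRk_insert_le_add_one e X

lemma rk_union_add_rk_le_of_subset (hXY : X ⊆ Y) (W : Set α) :
    M.rk (Y ∪ W) + M.rk X ≤ M.rk (X ∪ W) + M.rk Y := by
  have hsub := M.rk_inter_add_rk_union_le (X ∪ W) Y
  have hX : M.rk X ≤ M.rk ((X ∪ W) ∩ Y) := rk_mono (subset_inter subset_union_left hXY)
  rw [union_right_comm, union_eq_right.2 hXY] at hsub
  omega

lemma Indep.ncard_le_rk_of_subset (hI : M.Indep I) (hIX : I ⊆ X) : I.ncard ≤ M.rk X :=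
  hI.rk_eq_ncard ▸ rk_mono hIX

lemma indep_of_ncard_le_rk (hX : X.Finite) (h : X.ncard ≤ M.rk X) : M.Indep X := by
  refine (M.isRkFinite_set X).indep_of_encard_le_eRk ?_
  rw [← hX.cast_ncard_eq, ← cast_rk_eq]
  exact_mod_cast h

lemma Indep.insert_indep_of_rk_lt (hI : M.Indep I) (h : M.rk I < M.rk (insert e I)) :
    M.Indep (insert e I) := by
  refine indep_of_ncard_le_rk (hI.finite.insert e) ?_
  have := ncard_insert_le e I
  rw [hI.rk_eq_ncard] at h
  omega

end RankFinite

/-- Edmonds' rank condition for `S` to split into an independent set of `M₁ ／ C₁` and one of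
`M₂ ／ C₂`. -/
def PartitionCondition (M₁ M₂ : Matroid α) (C₁ C₂ S : Set α) : Prop :=
  ∀ T ⊆ S, T.ncard + M₁.rk C₁ + M₂.rk C₂ ≤ M₁.rk (C₁ ∪ T) + M₂.rk (C₂ ∪ T)

namespace PartitionCondition

lemma mono (h : PartitionCondition M₁ M₂ C₁ C₂ S) (hXS : X ⊆ S) :
    PartitionCondition M₁ M₂ C₁ C₂ X :=
  fun T hT ↦ h T (hT.trans hXS)

lemma rk_lt_or_rk_lt (h : PartitionCondition M₁ M₂ C₁ C₂ S) (he : e ∈ S) :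
    M₁.rk C₁ < M₁.rk (insert e C₁) ∨ M₂.rk C₂ < M₂.rk (insert e C₂) := by
  have := h {e} (singleton_subset_iff.2 he)
  rw [ncard_singleton, union_singleton, union_singleton] at this
  omega

lemma insert_sdiff_singleton [M₁.RankFinite]
    (hnt : ∀ Z ⊂ S, Z.Nonempty →
      Z.ncard + M₁.rk C₁ + M₂.rk C₂ < M₁.rk (C₁ ∪ Z) + M₂.rk (C₂ ∪ Z))
    (he : e ∈ S) : PartitionCondition M₁ M₂ (insert e C₁) C₂ (S \ {e}) := by
  intro Z hZ
  obtain rfl | hZne := Z.eq_empty_or_nonempty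
  · simp
  have hZS : Z ⊂ S := ssubset_of_subset_not_subset (hZ.trans sdiff_subset)
    fun hSZ ↦ (hZ (hSZ he)).2 rfl
  have := hnt Z hZS hZne
  have := M₁.rk_insert_le_add_one e C₁
  have : M₁.rk (C₁ ∪ Z) ≤ M₁.rk (insert e C₁ ∪ Z) :=
    rk_mono (union_subset_union_left Z (subset_insert e C₁))
  omega

lemma sdiff_of_tight [M₁.RankFinite] [M₂.RankFinite] (h : PartitionCondition M₁ M₂ C₁ C₂ S)
    (hS : S.Finite) (hZS : Z ⊆ S)
    (hZ : M₁.rk (C₁ ∪ Z) + M₂.rk (C₂ ∪ Z) ≤ Z.ncard + M₁.rk C₁ + M₂.rk C₂)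
    (hP₁ : P₁ ⊆ Z) (hP₂ : P₂ ⊆ Z) : PartitionCondition M₁ M₂ (C₁ ∪ P₁) (C₂ ∪ P₂) (S \ Z) := by
  intro W hW
  have hZW := h (Z ∪ W) (union_subset hZS (hW.trans sdiff_subset))
  rw [ncard_union_eq (disjoint_sdiff_right.mono_right hW) (hS.subset hZS)
    (hS.sdiff.subset hW), ← union_assoc, ← union_assoc] at hZW
  have h₁ := M₁.rk_union_add_rk_le_of_subset (union_subset_union_right C₁ hP₁) W
  have h₂ := M₂.rk_union_add_rk_le_of_subset (union_subset_union_right C₂ hP₂) W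
  omega

theorem exists_partition [M₁.RankFinite] [M₂.RankFinite]
    (h : PartitionCondition M₁ M₂ C₁ C₂ S) (hS : S.Finite) (hC₁ : M₁.Indep C₁)
    (hC₂ : M₂.Indep C₂) : ∃ P ⊆ S, M₁.Indep (C₁ ∪ P) ∧ M₂.Indep (C₂ ∪ (S \ P)) := by
  obtain ⟨n, hn⟩ : ∃ n, S.ncard = n := ⟨_, rfl⟩
  induction n using Nat.strong_induction_on generalizing S M₁ M₂ C₁ C₂ with
  | _ n ih =>
  obtain rfl | ⟨e, he⟩ := S.eq_empty_or_nonempty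
  · exact ⟨∅, empty_subset _, by simpa, by simpa⟩
  -- Either a nonempty proper subset `Z` is tight and `Z`, `S \ Z` are split one after the
  -- other, or any `e ∈ S` can be committed to a side on which it raises the rank.
  by_cases htight : ∃ Z ⊂ S, Z.Nonempty ∧
      M₁.rk (C₁ ∪ Z) + M₂.rk (C₂ ∪ Z) ≤ Z.ncard + M₁.rk C₁ + M₂.rk C₂
  · obtain ⟨Z, hZS, hZne, hZ⟩ := htight
    have hZS' := hZS.subset
    obtain ⟨P, hPZ, hP₁, hP₂⟩ := ih _ (hn ▸ ncard_lt_ncard hZS hS) (h.mono hZS')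
      (hS.subset hZS') hC₁ hC₂ rfl
    have hlt : (S \ Z).ncard < n :=
      hn ▸ ncard_lt_ncard (sdiff_ssubset_left_iff.2 (by rwa [inter_eq_right.2 hZS'])) hS
    obtain ⟨Q, hQ, hQ₁, hQ₂⟩ := ih _ hlt (h.sdiff_of_tight hS hZS' hZ hPZ sdiff_subset) hS.sdiff
      hP₁ hP₂ rfl
    refine ⟨P ∪ Q, union_subset (hPZ.trans hZS') (hQ.trans sdiff_subset),
      by rwa [← union_assoc], ?_⟩
    convert hQ₂ using 1
    ext x
    simp only [mem_union, mem_sdiff]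
    grind
  · push Not at htight
    have hlt : (S \ {e}).ncard < n := hn ▸ ncard_sdiff_singleton_lt_of_mem he hS
    obtain h₁ | h₂ := h.rk_lt_or_rk_lt he
    · obtain ⟨P, hP, hP₁, hP₂⟩ := ih _ hlt (insert_sdiff_singleton htight he) hS.sdiff
        (hC₁.insert_indep_of_rk_lt h₁) hC₂ rfl
      refine ⟨insert e P, insert_subset he (hP.trans sdiff_subset), by rwa [union_insert,
        ← insert_union], ?_⟩
      rwa [sdiff_sdiff, union_comm, ← insert_eq, union_comm] at hP₂
    · obtain ⟨P, hP, hP₂, hP₁⟩ := ih _ hlt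
        (insert_sdiff_singleton (fun Z hZ hZne ↦ by have := htight Z hZ hZne; omega) he)
        hS.sdiff (hC₂.insert_indep_of_rk_lt h₂) hC₁ rfl
      refine ⟨(S \ {e}) \ P, sdiff_subset.trans sdiff_subset, hP₁, ?_⟩
      convert hP₂ using 1
      ext x
      grind

end PartitionCondition

theorem exists_indep_split [M.RankFinite] (hC : M.Indep (C₁ ∪ C₂))
    (hS : M.Indep (S ∪ (C₁ ∩ C₂))) (hSC : Disjoint S (C₁ ∩ C₂)) :
    ∃ P ⊆ S, M.Indep (C₁ ∪ P) ∧ M.Indep (C₂ ∪ (S \ P)) := by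
  have hC₁ := hC.subset subset_union_left
  have hC₂ := hC.subset subset_union_right
  refine PartitionCondition.exists_partition (fun T hT ↦ ?_) (hS.finite.subset subset_union_left)
    hC₁ hC₂
  have hsub := M.rk_inter_add_rk_union_le (C₁ ∪ T) (C₂ ∪ T)
  rw [← inter_union_distrib_right, ← union_union_distrib_right,
    (hS.subset (union_subset subset_union_right (hT.trans subset_union_left))).rk_eq_ncard,
    ncard_union_eq (hSC.mono_left hT).symm
      (hC.finite.subset (inter_subset_left.trans subset_union_left))
      (hS.finite.subset (hT.trans subset_union_left))] at hsub
  have hmono : M.rk (C₁ ∪ C₂) ≤ M.rk (C₁ ∪ C₂ ∪ T) := rk_mono subset_union_left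
  have hcard := ncard_union_add_ncard_inter C₁ C₂ hC₁.finite hC₂.finite
  rw [hC₁.rk_eq_ncard, hC₂.rk_eq_ncard, hC.rk_eq_ncard] at *
  omega

theorem Indep.exists_cover [M.RankFinite] {𝒜 : Set (Set α)} (hD : M.Indep D) (h𝒜 : 𝒜.Finite)
    (hSD : Disjoint S D) (hScl : S ⊆ M.closure D) (hS : M.Indep (S ∪ (D \ ⋃₀ 𝒜))) :
    ∃ R : Set α → Set α, (∀ a ∈ 𝒜, R a ⊆ S ∧ M.Indep ((D \ a) ∪ R a)) ∧ S ⊆ ⋃ a ∈ 𝒜, R a := by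
  classical
  induction 𝒜, h𝒜 using Set.Finite.induction_on generalizing S with
  | empty =>
    rw [sUnion_empty, sdiff_empty] at hS
    have hS₀ : S = ∅ := eq_empty_of_forall_notMem fun x hx ↦
      (hD.notMem_closure_iff_of_notMem (disjoint_left.1 hSD hx)).2
        (hS.subset (insert_subset (.inl hx) subset_union_right)) (hScl hx)
    exact ⟨fun _ ↦ ∅, by simp, by simp [hS₀]⟩
  | @insert a₀ 𝒜 ha₀ _ ih =>
    obtain ⟨P, hPS, hP₁, hP₂⟩ := exists_indep_split (C₁ := D \ a₀) (C₂ := D \ ⋃₀ 𝒜)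
      (hD.subset (union_subset sdiff_subset sdiff_subset))
      (by rwa [sdiff_inter_sdiff, ← sUnion_insert])
      (hSD.mono_right (inter_subset_left.trans sdiff_subset))
    obtain ⟨R, hR, hcov⟩ := ih (S := S \ P) (hSD.mono_left sdiff_subset)
      (sdiff_subset.trans hScl) (by rwa [union_comm])
    refine ⟨Function.update R a₀ P, ?_, fun x hx ↦ ?_⟩
    · rintro a (rfl | ha)
      · simpa using ⟨hPS, hP₁⟩
      · rw [Function.update_of_ne (ne_of_mem_of_not_mem ha ha₀)]
        exact ⟨(hR a ha).1.trans sdiff_subset, (hR a ha).2⟩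
    · by_cases hxP : x ∈ P
      · exact mem_biUnion (mem_insert a₀ 𝒜) (by simpa using hxP)
      · obtain ⟨a, ha, hxa⟩ := mem_iUnion₂.1 (hcov ⟨hx, hxP⟩)
        exact mem_biUnion (mem_insert_of_mem a₀ ha)
          (by rwa [Function.update_of_ne (ne_of_mem_of_not_mem ha ha₀)])

lemma Indep.ncard_le_of_indep_sdiff_union [M.RankFinite] {a R : Set α} (hD : M.Indep D)
    (haD : a ⊆ D) (hRD : Disjoint R D) (hR : R ⊆ M.closure D) (h : M.Indep ((D \ a) ∪ R)) :
    R.ncard ≤ a.ncard := by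
  have hle := h.ncard_le_rk_of_subset (union_subset (sdiff_subset.trans (M.subset_closure D)) hR)
  rw [rk_closure_eq, hD.rk_eq_ncard, ncard_union_eq (hRD.symm.mono_left sdiff_subset)
    hD.finite.sdiff (h.finite.subset subset_union_right),
    ncard_sdiff haD (hD.finite.subset haD)] at hle
  have := ncard_le_ncard haD hD.finite
  omega

theorem Indep.exists_exchange_cover [M.RankFinite] {𝒜 : Set (Set α)} {J : Set α}
    (hI : M.Indep (⋃₀ 𝒜)) (hJ : M.Indep J) :
    ∃ (D : Set α) (R : Set α → Set α), M.Indep D ∧ ⋃₀ 𝒜 ⊆ D ∧ J ⊆ D ∪ ⋃ a ∈ 𝒜, R a ∧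
      ∀ a ∈ 𝒜, R a ⊆ J ∧ M.Indep ((D \ a) ∪ R a) ∧ (R a).ncard ≤ a.ncard := by
  obtain ⟨D, hD, hID⟩ := hI.subset_isBasis_of_subset (subset_union_left (t := J))
    (union_subset hI.subset_ground hJ.subset_ground)
  have hScl : J \ D ⊆ M.closure D := by
    rw [hD.closure_eq_closure]
    exact sdiff_subset.trans (subset_union_right.trans (M.subset_closure _ hD.subset_ground))
  have h𝒜 : 𝒜.Finite := hI.finite.finite_subsets.subset fun a ha ↦ subset_sUnion_of_mem ha
  obtain ⟨R, hR, hcov⟩ := hD.indep.exists_cover h𝒜 disjoint_sdiff_left hScl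
    (hJ.subset (union_subset sdiff_subset fun x hx ↦ (hD.subset hx.1).resolve_left hx.2))
  refine ⟨D, R, hD.indep, hID, fun x hx ↦ ?_, fun a ha ↦ ⟨(hR a ha).1.trans sdiff_subset,
    (hR a ha).2, ?_⟩⟩
  · by_cases hxD : x ∈ D
    exacts [.inl hxD, .inr (hcov ⟨hx, hxD⟩)]
  · exact hD.indep.ncard_le_of_indep_sdiff_union ((subset_sUnion_of_mem ha).trans hID)
      (disjoint_sdiff_left.mono_left (hR a ha).1) ((hR a ha).1.trans hScl) (hR a ha).2

end Matroid

lemma Set.subset_union_biUnion_inter_nonempty {α ι : Type*} {b D : Set α} {A : Set ι}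
    {R : ι → Set α} (h : b ⊆ D ∪ ⋃ i ∈ A, R i) :
    b ⊆ D ∪ ⋃ i ∈ {i ∈ A | (b ∩ R i).Nonempty}, R i := by
  intro x hx
  obtain hxD | hxR := h hx
  · exact .inl hxD
  · obtain ⟨i, hi, hxi⟩ := mem_iUnion₂.1 hxR
    exact .inr (mem_biUnion ⟨hi, x, hx, hxi⟩ hxi)

lemma Set.Pairwise.ncard_setOf_inter_nonempty_le {α : Type*} {ℬ : Set (Set α)} {R : Set α}
    (hℬ : ℬ.Pairwise Disjoint) (hR : R.Finite) :
    {b ∈ ℬ | (b ∩ R).Nonempty}.ncard ≤ R.ncard := by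
  obtain rfl | ⟨x₀, -⟩ := R.eq_empty_or_nonempty
  · simp
  have : Nonempty α := ⟨x₀⟩
  have : ∀ b ∈ {b ∈ ℬ | (b ∩ R).Nonempty}, ∃ x, x ∈ b ∩ R := fun b hb ↦ hb.2
  choose! f hf using this
  refine ncard_le_ncard_of_injOn f (fun b hb ↦ (hf b hb).2) (fun b hb b' hb' hbb' ↦ ?_) hR
  by_contra hne
  exact disjoint_left.1 (hℬ hb.1 hb'.1 hne) (hf b hb).1 (hbb' ▸ (hf b' hb').1)

/-- exchange lemma for matroid `k`-parity constraints (disjoint case). -/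
theorem matroid_k_parity_exchange {V : Type*} (M : Matroid V) (hfin : M.E.Finite)
    (k : ℕ) (E : Set (Set V))
    (hdisj : E.Pairwise Disjoint)
    (hcard : ∀ e ∈ E, e.ncard ≤ k)
    (A B : Set (Set V)) (hAE : A ⊆ E) (hBE : B ⊆ E)
    (hA : M.Indep (⋃₀ A)) (hB : M.Indep (⋃₀ B)) (hAB : Disjoint A B) :
    ∃ N : Set V → Set (Set V),
      (∀ b ∈ B, N b ⊆ A) ∧
      M.Indep (⋃₀ (A ∪ {b ∈ B | N b = ∅})) ∧
      (∀ a ∈ A, M.Indep (⋃₀ ((A \ {a}) ∪ {b ∈ B | N b = {a}}))) ∧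
      (∀ a ∈ A, {b ∈ B | a ∈ N b}.ncard ≤ k) := by
  have : M.Finite := ⟨hfin⟩
  obtain ⟨D, R, hD, hAD, hBD, hR⟩ := hA.exists_exchange_cover hB
  have hcov (b) (hb : b ∈ B) := Set.subset_union_biUnion_inter_nonempty
    ((subset_sUnion_of_mem hb).trans hBD)
  refine ⟨fun b ↦ {a ∈ A | (b ∩ R a).Nonempty}, fun b _ ↦ sep_subset _ _, ?_, fun a ha ↦ ?_,
    fun a ha ↦ ?_⟩
  · refine hD.subset (sUnion_subset ?_)
    rintro t (ht | ⟨htB, htN⟩)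
    · exact (subset_sUnion_of_mem ht).trans hAD
    · simpa [htN] using hcov t htB
  · refine (hR a ha).2.1.subset (sUnion_subset ?_)
    rintro t (⟨htA, hta⟩ | ⟨htB, htN⟩)
    · have hta : Disjoint t a := hdisj (hAE htA) (hAE ha) hta
      exact fun x hx ↦ .inl ⟨hAD ⟨t, htA, hx⟩, disjoint_left.1 hta hx⟩
    · have hta : Disjoint t a := hdisj (hBE htB) (hAE ha) (hAB.ne_of_mem ha htB).symm
      have htD : t ⊆ D ∪ R a := by simpa [htN] using hcov t htB
      exact fun x hx ↦ (htD hx).imp_left fun hxD ↦ ⟨hxD, disjoint_left.1 hta hx⟩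
  · calc {b ∈ B | a ∈ {a ∈ A | (b ∩ R a).Nonempty}}.ncard
        = {b ∈ B | (b ∩ R a).Nonempty}.ncard := by simp [ha]
      _ ≤ (R a).ncard :=
        (hdisj.mono hBE).ncard_setOf_inter_nonempty_le (hB.finite.subset (hR a ha).1)
      _ ≤ a.ncard := (hR a ha).2.2
      _ ≤ k := hcard a (hAE ha)
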